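/- A set whose nonlocal mean curvature differs from the arithmetic mean of its extremal nonlocal directional curvatures: let N = 3, f(x,y) = 8x²y², and E = {(x,y,z) ∈ ℝ³ : z ≤ 8x²y²}. For θ ∈ [0,2π] the nonlocal directional curvature of ∂E at 0 in direction e = (cosθ, sinθ) equals K_{s,θ} = 2·∫₀^{+∞} dρ ∫₀^{(1−cos4θ)ρ⁴} dz · ρ/(ρ²+z²)^{s+3/2}. Then: (i) K_{s,θ} ≥ 0 for all θ and K_{s,0} = K_{s,π/2} = 0, so the minimum λ₋ of θ ↦ K_{s,θ} equals 0 and is attained at the directions (1,0) and (0,1); (ii) the maximum λ₊ of θ ↦ K_{s,θ} is attained at θ = π/4, i.e. at the direction (√2/2, √2/2); (iii) the nonlocal mean curvature H_s = (1/(2π))·∫₀^{2π} K_{s,θ} dθ satisfies H_s > (λ₋ + λ₊)/2 = K_{s,π/4}/2. -/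

import Mathlib

open MeasureTheory Filter
open MeasureTheory Set intervalIntegral Real

/-- The nonlocal directional curvature at `0`, in the direction `(cos θ, sin θ)`, of the
boundary of `E = {(x,y,z) ∈ ℝ³ : z ≤ 8x²y²}`:
`K_{s,θ} = 2·∫₀^{+∞} dρ ∫₀^{(1−cos 4θ)ρ⁴} dz · ρ/(ρ²+z²)^{s+3/2}`. -/
noncomputable def Kex (s θ : ℝ) : ℝ :=
  2 * ∫ ρ in Set.Ioi (0 : ℝ),
      ∫ z in (0:ℝ)..((1 - Real.cos (4 * θ)) * ρ ^ 4), ρ / (ρ ^ 2 + z ^ 2) ^ (s + 3 / 2)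



noncomputable def Finn (s c ρ : ℝ) : ℝ :=
  ∫ z in (0:ℝ)..(c * ρ ^ 4), ρ / (ρ ^ 2 + z ^ 2) ^ (s + 3 / 2)

lemma Finn_scale {s : ℝ} {μ : ℝ} (hμ : 0 < μ) (c : ℝ) {ρ : ℝ} (hρ : 0 < ρ) :
    Finn s c (μ * ρ) = μ ^ (-(2*s) - 1) * Finn s (c * μ ^ 3) ρ := by
  set q := s + 3/2 with hq
  have key : (μ • ∫ w in (0:ℝ)..(c * μ ^ 3 * ρ ^ 4),
      (fun z => (μ*ρ) / ((μ*ρ) ^ 2 + z ^ 2) ^ q) (μ * w))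
      = ∫ z in (μ*0)..(μ*(c * μ ^ 3 * ρ ^ 4)), (μ*ρ) / ((μ*ρ) ^ 2 + z ^ 2) ^ q :=
    intervalIntegral.smul_integral_comp_mul_left (fun z => (μ*ρ) / ((μ*ρ) ^ 2 + z ^ 2) ^ q) μ
  have h1 : Finn s c (μ * ρ) = μ * ∫ w in (0:ℝ)..(c * μ ^ 3 * ρ ^ 4),
      (μ*ρ) / ((μ*ρ) ^ 2 + (μ*w) ^ 2) ^ q := by
    rw [Finn]
    rw [show c * (μ*ρ)^4 = μ * (c * μ ^ 3 * ρ ^ 4) by ring, show (0:ℝ) = μ * 0 by ring]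
    rw [← key]
    simp [smul_eq_mul]
  have h2 : ∀ w : ℝ, (μ*ρ) / ((μ*ρ) ^ 2 + (μ*w) ^ 2) ^ q
      = (μ * (μ ^ (2*q))⁻¹) * (ρ / (ρ ^ 2 + w ^ 2) ^ q) := by
    intro w
    have hbase : ((μ*ρ)^2 + (μ*w)^2 : ℝ) = μ^2 * (ρ^2 + w^2) := by ring
    have hpos : (0:ℝ) < ρ^2 + w^2 := by positivity
    rw [hbase, Real.mul_rpow (by positivity) hpos.le]
    have hμq : (μ^(2:ℕ):ℝ) ^ q = μ ^ (2*q) := by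
      rw [← Real.rpow_natCast μ 2, ← Real.rpow_mul hμ.le]
      norm_num
    rw [hμq]
    have h1 : (μ ^ (2*q)) ≠ 0 := by positivity
    have h2 : ((ρ^2 + w^2) ^ q : ℝ) ≠ 0 := by positivity
    field_simp
  rw [h1]
  simp_rw [h2]
  rw [intervalIntegral.integral_const_mul]
  rw [Finn]
  have hexp : μ ^ (-(2*s) - 1) = μ^(2:ℕ) * (μ ^ (2*q))⁻¹ := by
    rw [← Real.rpow_natCast μ 2, ← Real.rpow_neg hμ.le, ← Real.rpow_add hμ]
    rw [hq]; ring_nf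
  rw [hexp]; ring

lemma J_scale {s : ℝ} {μ : ℝ} (hμ : 0 < μ) (c : ℝ) :
    ∫ ρ in Ioi (0:ℝ), Finn s c ρ = μ ^ (-(2*s)) * ∫ ρ in Ioi (0:ℝ), Finn s (c * μ ^ 3) ρ := by
  have h := MeasureTheory.integral_comp_mul_left_Ioi (Finn s c) 0 hμ
  rw [mul_zero] at h
  have h2 : ∫ x in Ioi (0:ℝ), Finn s c (μ * x)
      = μ ^ (-(2*s)-1) * ∫ x in Ioi (0:ℝ), Finn s (c*μ^3) x := by
    rw [← MeasureTheory.integral_const_mul]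
    exact setIntegral_congr_fun measurableSet_Ioi (fun ρ hρ => Finn_scale hμ c hρ)
  rw [h2, smul_eq_mul] at h
  have h3 : ∫ ρ in Ioi (0:ℝ), Finn s c ρ
      = μ * (μ ^ (-(2*s)-1) * ∫ x in Ioi (0:ℝ), Finn s (c*μ^3) x) := by
    rw [h, ← mul_assoc, mul_inv_cancel₀ hμ.ne', one_mul]
  have h4 : μ * μ ^ (-(2*s)-1) = μ ^ (-(2*s)) := by
    nth_rewrite 1 [← Real.rpow_one μ]
    rw [← Real.rpow_add hμ]
    norm_num
  rw [h3, ← mul_assoc, h4]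

lemma J_eq {s : ℝ} (hs0 : 0 < s) {c : ℝ} (hc : 0 ≤ c) :
    ∫ ρ in Ioi (0:ℝ), Finn s c ρ
      = (c/2) ^ (2*s/3) * ∫ ρ in Ioi (0:ℝ), Finn s 2 ρ := by
  rcases eq_or_lt_of_le hc with h0 | h0
  · rw [← h0]
    simp [Finn, Real.zero_rpow (by positivity : (2*s/3) ≠ 0)]
  · set μ := (2/c) ^ ((1:ℝ)/3) with hμdef
    have hμ : 0 < μ := Real.rpow_pos_of_pos (by positivity) _
    have hμ3 : c * μ ^ 3 = 2 := by
      have hcube : μ ^ (3:ℕ) = 2/c := by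
        rw [hμdef, ← Real.rpow_natCast ((2/c) ^ ((1:ℝ)/3)) 3,
          ← Real.rpow_mul (by positivity)]
        norm_num
      rw [hcube]; field_simp
    have hsc := J_scale (s := s) hμ c
    rw [hμ3] at hsc
    rw [hsc]
    congr 1
    rw [hμdef, ← Real.rpow_mul (by positivity),
      show (1/3:ℝ)*(-(2*s)) = -(2*s/3) by ring,
      Real.rpow_neg (by positivity), ← Real.inv_rpow (by positivity), inv_div]

lemma cont_integrand {s ρ : ℝ} (hs : 0 < s) (hρ : 0 < ρ) :
    Continuous fun z : ℝ => ρ / (ρ ^ 2 + z ^ 2) ^ (s + 3/2) := by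
  apply continuous_const.div
  · exact (continuous_const.add (continuous_pow 2)).rpow_const
      (fun z => Or.inr (by linarith))
  · intro z; positivity

lemma Finn_nonneg {s c ρ : ℝ} (hc : 0 ≤ c) (hρ : 0 ≤ ρ) : 0 ≤ Finn s c ρ :=
  intervalIntegral.integral_nonneg (by positivity) (fun z _ => by positivity)

lemma Finn_pos {s ρ : ℝ} (hs : 0 < s) (hρ : 0 < ρ) : 0 < Finn s 2 ρ :=
  intervalIntegral.intervalIntegral_pos_of_pos_on
    (((cont_integrand hs hρ)).intervalIntegrable _ _)
    (fun z _ => by positivity) (by positivity)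

lemma contG {s : ℝ} (hs : 0 < s) : Continuous fun b : ℝ => Finn s b 1 := by
  have h : Continuous fun t : ℝ => ∫ z in (0:ℝ)..t, (1:ℝ) / ((1:ℝ) ^ 2 + z ^ 2) ^ (s + 3/2) :=
    intervalIntegral.continuous_primitive
      (fun a b => (cont_integrand hs one_pos).intervalIntegrable a b) 0
  exact h.comp (continuous_id.mul continuous_const)

lemma G_le_self {s b : ℝ} (hs : 0 < s) (hb : 0 ≤ b) : Finn s b 1 ≤ b := by
  have h1 : Finn s b 1 ≤ ∫ _z in (0:ℝ)..(b*1^4), (1:ℝ) := by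
    apply intervalIntegral.integral_mono_on (by positivity)
      ((cont_integrand hs one_pos).intervalIntegrable _ _)
      intervalIntegrable_const
    intro z _
    rw [div_le_one (by positivity)]
    apply Real.one_le_rpow (by nlinarith) (by linarith)
  simpa using h1

lemma G_le_pi {s b : ℝ} (hs : 0 < s) (hb : 0 ≤ b) : Finn s b 1 ≤ Real.pi / 2 := by
  have h1 : Finn s b 1 ≤ ∫ z in (0:ℝ)..(b*1^4), 1 / (1 + z ^ 2) := by
    apply intervalIntegral.integral_mono_on (by positivity)
      ((cont_integrand hs one_pos).intervalIntegrable _ _)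
      (by apply Continuous.intervalIntegrable; apply continuous_const.div
            (by continuity) (fun z => by positivity))
    intro z _
    have hz : ((1:ℝ)^2 + z^2) = 1 + z^2 := by norm_num
    rw [hz]
    apply div_le_div_of_nonneg_left one_pos.le (by positivity)
    calc (1 + z^2 : ℝ) = (1 + z^2) ^ (1:ℝ) := by rw [Real.rpow_one]
    _ ≤ (1 + z^2) ^ (s + 3/2) :=
        Real.rpow_le_rpow_of_exponent_le (by nlinarith) (by linarith)
  rw [integral_one_div_one_add_sq] at h1
  simp only [Real.arctan_zero, sub_zero] at h1
  exact h1.trans (Real.arctan_lt_pi_div_two _).le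

lemma Finn_two_eq {s ρ : ℝ} (hρ : 0 < ρ) :
    Finn s 2 ρ = ρ ^ (-(2*s)-1) * Finn s (2*ρ^3) 1 := by
  have h := Finn_scale (s := s) hρ 2 one_pos
  rwa [mul_one] at h

lemma Finn_contOn {s : ℝ} (hs : 0 < s) : ContinuousOn (Finn s 2) (Ioi (0:ℝ)) := by
  have hnice : ContinuousOn (fun ρ : ℝ => ρ ^ (-(2*s)-1) * Finn s (2*ρ^3) 1) (Ioi (0:ℝ)) := by
    apply ContinuousOn.mul
    · exact continuousOn_id.rpow_const (fun x hx => Or.inl (ne_of_gt hx))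
    · exact ((contG hs).comp (by continuity)).continuousOn
  exact hnice.congr (fun ρ hρ => Finn_two_eq hρ)

lemma Finn_integrableOn {s : ℝ} (hs0 : 0 < s) (hs1 : s < 1/2) :
    IntegrableOn (Finn s 2) (Ioi (0:ℝ)) := by
  have hae : AEStronglyMeasurable (Finn s 2) (volume.restrict (Ioi (0:ℝ))) :=
    (Finn_contOn hs0).aestronglyMeasurable measurableSet_Ioi
  have h1 : IntegrableOn (Finn s 2) (Ioc (0:ℝ) 1) := by
    apply Integrable.mono (g := fun _ : ℝ => (2:ℝ))
    · exact integrableOn_const (by simp)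
    · exact hae.mono_measure (Measure.restrict_mono Ioc_subset_Ioi_self le_rfl)
    · apply (ae_restrict_iff' measurableSet_Ioc).2 (ae_of_all _ ?_)
      intro ρ hρ
      have hρ0 : (0:ℝ) < ρ := hρ.1
      have key : Finn s 2 ρ ≤ 2 * ρ ^ (2 - 2*s) := by
        have hA : Finn s (2*ρ^3) 1 ≤ 2*ρ^3 := G_le_self hs0 (by positivity)
        have hB : (0:ℝ) ≤ ρ ^ (-(2*s)-1) := Real.rpow_nonneg hρ0.le _
        have hC : ρ ^ (-(2*s)-1) * ρ ^ (3:ℕ) = ρ ^ (2-2*s) := by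
          rw [← Real.rpow_natCast ρ 3, ← Real.rpow_add hρ0]; ring_nf
        calc Finn s 2 ρ = ρ ^ (-(2*s)-1) * Finn s (2*ρ^3) 1 := Finn_two_eq hρ0
        _ ≤ ρ ^ (-(2*s)-1) * (2*ρ^3) := mul_le_mul_of_nonneg_left hA hB
        _ = 2 * (ρ ^ (-(2*s)-1) * ρ ^ (3:ℕ)) := by ring
        _ = 2 * ρ ^ (2-2*s) := by rw [hC]
      have h2' : ρ ^ (2-2*s) ≤ 1 := Real.rpow_le_one hρ0.le hρ.2 (by linarith)
      have hnn : (0:ℝ) ≤ Finn s 2 ρ := Finn_nonneg (by norm_num) hρ0.le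
      rw [Real.norm_eq_abs, Real.norm_eq_abs, abs_of_nonneg hnn,
        abs_of_nonneg (by norm_num : (0:ℝ) ≤ 2)]
      nlinarith
  have h2 : IntegrableOn (Finn s 2) (Ioi (1:ℝ)) := by
    apply Integrable.mono (g := fun ρ : ℝ => (Real.pi/2) * ρ ^ (-(2*s)-1))
    · exact (integrableOn_Ioi_rpow_of_lt (by linarith) one_pos).const_mul _
    · exact hae.mono_measure
        (Measure.restrict_mono (Ioi_subset_Ioi (by norm_num)) le_rfl)
    · apply (ae_restrict_iff' measurableSet_Ioi).2 (ae_of_all _ ?_)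
      intro ρ hρ
      have hρ0 : (0:ℝ) < ρ := lt_trans one_pos hρ
      have key : Finn s 2 ρ ≤ (Real.pi/2) * ρ ^ (-(2*s)-1) := by
        have hA : Finn s (2*ρ^3) 1 ≤ Real.pi/2 := G_le_pi hs0 (by positivity)
        have hB : (0:ℝ) ≤ ρ ^ (-(2*s)-1) := Real.rpow_nonneg hρ0.le _
        calc Finn s 2 ρ = ρ ^ (-(2*s)-1) * Finn s (2*ρ^3) 1 := Finn_two_eq hρ0
        _ ≤ ρ ^ (-(2*s)-1) * (Real.pi/2) := mul_le_mul_of_nonneg_left hA hB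
        _ = (Real.pi/2) * ρ ^ (-(2*s)-1) := by ring
      have hnn : (0:ℝ) ≤ Finn s 2 ρ := Finn_nonneg (by norm_num) hρ0.le
      have hgnn : (0:ℝ) ≤ (Real.pi/2) * ρ ^ (-(2*s)-1) := by
        have := Real.pi_pos
        have := Real.rpow_nonneg hρ0.le (-(2*s)-1)
        positivity
      rw [Real.norm_eq_abs, Real.norm_eq_abs, abs_of_nonneg hnn, abs_of_nonneg hgnn]
      exact key
  have hu := h1.union h2
  rwa [Set.Ioc_union_Ioi_eq_Ioi zero_le_one] at hu

lemma J2_pos {s : ℝ} (hs0 : 0 < s) (hs1 : s < 1/2) :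
    0 < ∫ ρ in Ioi (0:ℝ), Finn s 2 ρ := by
  rw [setIntegral_pos_iff_support_of_nonneg_ae
    ((ae_restrict_iff' measurableSet_Ioi).2
      (ae_of_all _ fun ρ hρ => Finn_nonneg (by norm_num) (le_of_lt hρ)))
    (Finn_integrableOn hs0 hs1)]
  have hsub : Ioi (0:ℝ) ⊆ Function.support (Finn s 2) ∩ Ioi 0 :=
    fun ρ hρ => ⟨ne_of_gt (Finn_pos hs0 hρ), hρ⟩
  calc (0:ENNReal) < volume (Ioi (0:ℝ)) := by rw [Real.volume_Ioi]; simp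
  _ ≤ _ := measure_mono hsub

lemma integral_x : ∫ θ in (0:ℝ)..(2*Real.pi), (1 - Real.cos (4*θ))/2 = Real.pi := by
  have h1 : IntervalIntegrable (fun θ : ℝ => Real.cos (4*θ)) volume 0 (2*Real.pi) :=
    (Real.continuous_cos.comp (by continuity)).intervalIntegrable _ _
  have hc : ∫ θ in (0:ℝ)..(2*Real.pi), Real.cos (4*θ) = 0 := by
    rw [intervalIntegral.integral_comp_mul_left Real.cos (by norm_num : (4:ℝ) ≠ 0),
      integral_cos, mul_zero, Real.sin_zero,
      show 4*(2*Real.pi) = (8:ℤ)*Real.pi by push_cast; ring, Real.sin_int_mul_pi]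
    simp
  rw [intervalIntegral.integral_div,
    intervalIntegral.integral_sub intervalIntegrable_const h1, hc,
    intervalIntegral.integral_const]
  simp [smul_eq_mul]

lemma cont_m {s : ℝ} (hs0 : 0 < s) :
    Continuous fun θ : ℝ => ((1 - Real.cos (4*θ))/2) ^ (2*s/3) := by
  apply Continuous.rpow_const (by continuity)
  exact fun θ => Or.inr (by positivity)

lemma m_ge {s θ : ℝ} (hs0 : 0 < s) (hs1 : s < 1/2) :
    (1 - Real.cos (4*θ))/2 ≤ ((1 - Real.cos (4*θ))/2) ^ (2*s/3) := by
  have hx0 : (0:ℝ) ≤ (1 - Real.cos (4*θ))/2 := by linarith [Real.cos_le_one (4*θ)]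
  have hx1 : (1 - Real.cos (4*θ))/2 ≤ 1 := by linarith [Real.neg_one_le_cos (4*θ)]
  rcases eq_or_lt_of_le hx0 with h|h
  · rw [← h, Real.zero_rpow (by positivity)]
  · have h2 := Real.rpow_le_rpow_of_exponent_ge h hx1 (by linarith : 2*s/3 ≤ 1)
    rwa [Real.rpow_one] at h2

lemma m_gt {s θ : ℝ} (hs0 : 0 < s) (hs1 : s < 1/2) (hθ : θ ∈ Ioo (0:ℝ) (Real.pi/4)) :
    (1 - Real.cos (4*θ))/2 < ((1 - Real.cos (4*θ))/2) ^ (2*s/3) := by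
  have h4θ0 : 0 < 4*θ := by linarith [hθ.1]
  have h4θπ : 4*θ < Real.pi := by linarith [hθ.2]
  have hlt1 : Real.cos (4*θ) < 1 := by
    have h := Real.cos_lt_cos_of_nonneg_of_le_pi le_rfl h4θπ.le h4θ0
    rwa [Real.cos_zero] at h
  have hgt : -1 < Real.cos (4*θ) := by
    have h := Real.cos_lt_cos_of_nonneg_of_le_pi h4θ0.le le_rfl h4θπ
    rwa [Real.cos_pi] at h
  have hx0 : (0:ℝ) < (1 - Real.cos (4*θ))/2 := by linarith
  have hx1 : (1 - Real.cos (4*θ))/2 < 1 := by linarith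
  have h2 := Real.rpow_lt_rpow_of_exponent_gt hx0 hx1 (by linarith : 2*s/3 < 1)
  rwa [Real.rpow_one] at h2

lemma integral_m_gt {s : ℝ} (hs0 : 0 < s) (hs1 : s < 1/2) :
    Real.pi < ∫ θ in (0:ℝ)..(2*Real.pi), ((1 - Real.cos (4*θ))/2) ^ (2*s/3) := by
  have hcx : Continuous fun θ : ℝ => (1 - Real.cos (4*θ))/2 := by continuity
  have hcm := cont_m (s := s) hs0
  have hd : Continuous fun θ : ℝ =>
      ((1 - Real.cos (4*θ))/2) ^ (2*s/3) - (1 - Real.cos (4*θ))/2 := hcm.sub hcx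
  have hπ := Real.pi_pos
  have hsplit := intervalIntegral.integral_add_adjacent_intervals (μ := volume)
    (a := (0:ℝ)) (b := Real.pi/4) (c := 2*Real.pi)
    (hd.intervalIntegrable _ _) (hd.intervalIntegrable _ _)
  have hpos1 : 0 < ∫ θ in (0:ℝ)..(Real.pi/4),
      (((1 - Real.cos (4*θ))/2) ^ (2*s/3) - (1 - Real.cos (4*θ))/2) :=
    intervalIntegral.intervalIntegral_pos_of_pos_on (hd.intervalIntegrable _ _)
      (fun θ hθ => sub_pos.2 (m_gt hs0 hs1 hθ)) (by linarith)
  have hpos2 : 0 ≤ ∫ θ in (Real.pi/4)..(2*Real.pi),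
      (((1 - Real.cos (4*θ))/2) ^ (2*s/3) - (1 - Real.cos (4*θ))/2) :=
    intervalIntegral.integral_nonneg (by linarith)
      (fun θ _ => sub_nonneg.2 (m_ge hs0 hs1))
  have hdiff : ∫ θ in (0:ℝ)..(2*Real.pi),
      (((1 - Real.cos (4*θ))/2) ^ (2*s/3) - (1 - Real.cos (4*θ))/2)
      = (∫ θ in (0:ℝ)..(2*Real.pi), ((1 - Real.cos (4*θ))/2) ^ (2*s/3))
        - ∫ θ in (0:ℝ)..(2*Real.pi), (1 - Real.cos (4*θ))/2 :=
    intervalIntegral.integral_sub (hcm.intervalIntegrable _ _) (hcx.intervalIntegrable _ _)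
  have hx := integral_x
  rw [hdiff, hx] at hsplit
  linarith


/-- **A set whose nonlocal mean curvature differs from the arithmetic mean of its extremal
nonlocal directional curvatures** (`E = {z ≤ 8x²y²} ⊆ ℝ³`):
(i) `K_{s,θ} ≥ 0` with `K_{s,0} = K_{s,π/2} = 0`, so the minimum `λ₋ = 0` is attained at the
directions `(1,0)` and `(0,1)`;
(ii) the maximum `λ₊` is attained at `θ = π/4`, i.e. at the direction `(√2/2, √2/2)`;
(iii) the nonlocal mean curvature `H_s = (1/(2π))·∫₀^{2π} K_{s,θ} dθ` satisfies
`H_s > (λ₋+λ₊)/2 = K_{s,π/4}/2`. -/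
theorem nonlocal_curvature_example (s : ℝ) (hs : s ∈ Set.Ioo (0 : ℝ) (1 / 2)) :
    (∀ θ : ℝ, 0 ≤ Kex s θ) ∧
    Kex s 0 = 0 ∧ Kex s (Real.pi / 2) = 0 ∧
    (∀ θ : ℝ, Kex s θ ≤ Kex s (Real.pi / 4)) ∧
    (Kex s 0 + Kex s (Real.pi / 4)) / 2 <
      (1 / (2 * Real.pi)) * ∫ θ in (0:ℝ)..(2 * Real.pi), Kex s θ := by
  obtain ⟨hs0, hs1⟩ := hs
  have hp : (2*s/3) ≠ 0 := by positivity
  have hKF : ∀ θ : ℝ, Kex s θ = 2 * ∫ ρ in Ioi (0:ℝ), Finn s (1 - Real.cos (4*θ)) ρ :=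
    fun θ => rfl
  have hc2 : (1:ℝ) - Real.cos (4*(Real.pi/4)) = 2 := by
    rw [show 4*(Real.pi/4) = Real.pi by ring, Real.cos_pi]; norm_num
  have hK4 : Kex s (Real.pi/4) = 2 * ∫ ρ in Ioi (0:ℝ), Finn s 2 ρ := by
    rw [hKF, hc2]
  have hKpos : 0 < Kex s (Real.pi/4) := by
    rw [hK4]; have := J2_pos hs0 hs1; linarith
  have hKeq : ∀ θ : ℝ, Kex s θ
      = ((1 - Real.cos (4*θ))/2) ^ (2*s/3) * Kex s (Real.pi/4) := by
    intro θ
    rw [hKF θ, hK4, J_eq hs0 (by linarith [Real.cos_le_one (4*θ)])]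
    ring
  have hm0 : ∀ θ : ℝ, (0:ℝ) ≤ ((1 - Real.cos (4*θ))/2) ^ (2*s/3) := fun θ =>
    Real.rpow_nonneg (by linarith [Real.cos_le_one (4*θ)]) _
  have hK0 : Kex s 0 = 0 := by
    rw [hKeq 0, mul_zero (4:ℝ), Real.cos_zero]
    norm_num
    exact Or.inl (Real.zero_rpow hp)
  have hKpi2 : Kex s (Real.pi/2) = 0 := by
    rw [hKeq, show 4*(Real.pi/2) = 2*Real.pi by ring, Real.cos_two_pi]
    norm_num
    exact Or.inl (Real.zero_rpow hp)
  refine ⟨fun θ => ?_, hK0, hKpi2, fun θ => ?_, ?_⟩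
  · rw [hKeq θ]; exact mul_nonneg (hm0 θ) hKpos.le
  · rw [hKeq θ]
    apply mul_le_of_le_one_left hKpos.le
    exact Real.rpow_le_one (by linarith [Real.cos_le_one (4*θ)])
      (by linarith [Real.neg_one_le_cos (4*θ)]) (by positivity)
  · have hint : ∫ θ in (0:ℝ)..(2*Real.pi), Kex s θ
        = (∫ θ in (0:ℝ)..(2*Real.pi), ((1 - Real.cos (4*θ))/2) ^ (2*s/3))
          * Kex s (Real.pi/4) := by
      rw [← intervalIntegral.integral_mul_const]
      exact intervalIntegral.integral_congr (fun θ _ => hKeq θ)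
    have him := integral_m_gt hs0 hs1
    have hπ := Real.pi_pos
    have hlt : Real.pi * Kex s (Real.pi/4)
        < (∫ θ in (0:ℝ)..(2*Real.pi), ((1 - Real.cos (4*θ))/2) ^ (2*s/3))
          * Kex s (Real.pi/4) :=
      mul_lt_mul_of_pos_right him hKpos
    have heq : (1/(2*Real.pi)) * (Real.pi * Kex s (Real.pi/4))
        = (Kex s 0 + Kex s (Real.pi/4))/2 := by
      rw [hK0]; field_simp; ring
    rw [hint, ← heq]
    exact mul_lt_mul_of_pos_left hlt (by positivity)
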